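/- arXiv:2103.04976 — 4 statements merged into one kernel-verified Lean document; each statement's English description precedes it below -/
import Mathlib

section
/- Generalized Singleton bound for the sum-rank metric: for any code C ⊆ F_{q^m}^N with at least two codewords, |C| ≤ q^{m(N − d_SR(C) + 1)}, where d_SR(C) is the minimum sum-rank distance of C. -/
/-!
A block of a difference of codewords has rank at most its number of nonzero columns, so the
sum-rank distance is bounded by the Hamming distance of the flattened words in `Fqm ^ N`. The
Hamming Singleton argument then applies: two codewords agreeing on `N - d + 1` coordinates are at
Hamming distance `< d`, so restriction to these coordinates is injective on the code, and
`Fqm` has `q ^ m` elements.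
-/

/-- The matrix representation map with respect to an ordered basis `B`. -/
noncomputable def matrixRep {Fq Fqm : Type*} [Field Fq] [Field Fqm] [Algebra Fq Fqm]
    {m : ℕ} (B : Module.Basis (Fin m) Fq Fqm) {s : Type*} (c : s → Fqm) :
    Matrix (Fin m) s Fq :=
  Matrix.of fun i j => B.repr (c j) i

/-- The sum-rank distance for the partition `N = r 1 + ⋯ + r L`. -/
noncomputable def sumRankDist {Fq Fqm : Type*} [Field Fq] [Field Fqm] [Algebra Fq Fqm]
    {m L : ℕ} (B : Module.Basis (Fin m) Fq Fqm) (r : Fin L → ℕ)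
    (c d : (ℓ : Fin L) → Fin (r ℓ) → Fqm) : ℕ :=
  ∑ ℓ : Fin L, (matrixRep B (c ℓ) - matrixRep B (d ℓ)).rank

open Finset
open scoped Matrix

theorem Matrix.rank_le_card_col_ne_zero {m n R : Type*} [Fintype n] [Field R]
    (M : Matrix m n R) [DecidablePred fun j => Mᵀ j ≠ 0] : M.rank ≤ #{j | Mᵀ j ≠ 0} := by
  classical
  set w : n → R := fun j => if Mᵀ j = 0 then 0 else 1
  have hM : M = M * Matrix.diagonal w := by
    ext i j
    by_cases hj : Mᵀ j = 0
    · simp [w, hj, show M i j = 0 from congrFun hj i]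
    · simp [w, hj]
  calc M.rank = (M * Matrix.diagonal w).rank := congrArg _ hM
    _ ≤ (Matrix.diagonal w).rank := Matrix.rank_mul_le_right _ _
    _ = #{j | Mᵀ j ≠ 0} := by
      rw [Matrix.rank_diagonal, Fintype.card_subtype]
      simp [w]

theorem hammingDist_sigma_uncurry {α : Type*} {β : α → Type*} {γ : ∀ a, β a → Type*}
    [Fintype α] [∀ a, Fintype (β a)] [∀ a b, DecidableEq (γ a b)] (x y : ∀ a b, γ a b) :
    hammingDist (Sigma.uncurry x) (Sigma.uncurry y) = ∑ a, hammingDist (x a) (y a) := by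
  classical
  simp only [hammingDist]
  rw [← card_sigma]
  congr 1
  ext ⟨a, b⟩
  simp only [mem_sigma, mem_filter_univ, mem_univ, true_and]
  exact Iff.rfl

theorem hammingDist_le_card_sub_of_forall_mem_eq {ι : Type*} {β : ι → Type*} [Fintype ι]
    [∀ i, DecidableEq (β i)] {S : Finset ι} {x y : ∀ i, β i} (h : ∀ i ∈ S, x i = y i) :
    hammingDist x y ≤ Fintype.card ι - #S := by
  classical
  rw [← card_compl]
  exact card_le_card fun i hi => mem_compl.2 fun hS => ((mem_filter_univ _).1 hi) (h i hS)

theorem Finset.card_le_pow_of_le_hammingDist {ι α : Type*} [Fintype ι] [Fintype α]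
    [Nonempty α] [DecidableEq α] {C : Finset (ι → α)} {d : ℕ}
    (hC : ∀ x ∈ C, ∀ y ∈ C, x ≠ y → d ≤ hammingDist x y) :
    #C ≤ Fintype.card α ^ (Fintype.card ι - d + 1) := by
  classical
  -- `card ι - d + 1` exceeds `card ι` when `d = 0` or `ι` is empty
  obtain ⟨S, -, hS⟩ := (univ : Finset ι).exists_subset_card_eq
    (n := min (Fintype.card ι - d + 1) (Fintype.card ι)) (by simp)
  have hinj : Set.InjOn (fun (x : ι → α) (i : S) => x i) C := by
    intro x hx y hy hxy
    by_contra hne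
    have hle : hammingDist x y ≤ Fintype.card ι - #S :=
      hammingDist_le_card_sub_of_forall_mem_eq fun i hi => congrFun hxy ⟨i, hi⟩
    have hd := hC x hx y hy hne
    have hpos := hammingDist_pos.2 hne
    omega
  calc #C ≤ #(univ : Finset (S → α)) := card_le_card_of_injOn _ (fun _ _ => mem_univ _) hinj
    _ = Fintype.card α ^ #S := by simp
    _ ≤ Fintype.card α ^ (Fintype.card ι - d + 1) :=
      Nat.pow_le_pow_right Fintype.card_pos (hS ▸ min_le_left _ _)

theorem rank_matrixRep_sub_le_hammingDist {Fq Fqm : Type*} [Field Fq] [Field Fqm] [Algebra Fq Fqm]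
    [DecidableEq Fqm] {m : ℕ} (B : Module.Basis (Fin m) Fq Fqm) {s : Type*} [Fintype s]
    (c d : s → Fqm) :
    (matrixRep B c - matrixRep B d).rank ≤ hammingDist c d := by
  classical
  refine (Matrix.rank_le_card_col_ne_zero _).trans (card_le_card fun j => ?_)
  simp only [mem_filter_univ]
  refine mt fun hj => ?_
  ext i
  simp [matrixRep, hj]

theorem sumRankDist_le_hammingDist {Fq Fqm : Type*} [Field Fq] [Field Fqm] [Algebra Fq Fqm]
    [DecidableEq Fqm] {m L : ℕ} (B : Module.Basis (Fin m) Fq Fqm) (r : Fin L → ℕ)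
    (c d : (ℓ : Fin L) → Fin (r ℓ) → Fqm) :
    sumRankDist B r c d ≤ hammingDist (Sigma.uncurry c) (Sigma.uncurry d) := by
  rw [hammingDist_sigma_uncurry (γ := fun _ _ => Fqm)]
  exact sum_le_sum fun ℓ _ => rank_matrixRep_sub_le_hammingDist B (c ℓ) (d ℓ)

theorem sumRank_singleton_bound_general {Fq Fqm : Type*} [Field Fq] [Fintype Fq] [Field Fqm]
    [Algebra Fq Fqm] {m L : ℕ} (B : Module.Basis (Fin m) Fq Fqm) (r : Fin L → ℕ)
    (C : Finset ((ℓ : Fin L) → Fin (r ℓ) → Fqm))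
    (dmin : ℕ)
    (hd : IsLeast {k | ∃ c ∈ C, ∃ d ∈ C, c ≠ d ∧ sumRankDist B r c d = k} dmin) :
    C.card ≤ (Fintype.card Fq) ^ (m * ((∑ ℓ, r ℓ) - dmin + 1)) := by
  classical
  have : Fintype Fqm := Module.fintypeOfFintype B
  let flatten := (Equiv.piCurry fun ℓ (_ : Fin (r ℓ)) => Fqm).symm.toEmbedding
  have hcode : ∀ x ∈ C.map flatten, ∀ y ∈ C.map flatten, x ≠ y →
      dmin ≤ hammingDist x y := by
    simp only [mem_map]
    rintro _ ⟨c, hc, rfl⟩ _ ⟨c', hc', rfl⟩ hne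
    exact (hd.2 ⟨c, hc, c', hc', fun h => hne (h ▸ rfl), rfl⟩).trans
      (sumRankDist_le_hammingDist B r c c')
  calc #C = #(C.map flatten) := (card_map _).symm
    _ ≤ Fintype.card Fqm ^ (Fintype.card (Σ ℓ, Fin (r ℓ)) - dmin + 1) :=
      card_le_pow_of_le_hammingDist hcode
    _ = Fintype.card Fq ^ (m * ((∑ ℓ, r ℓ) - dmin + 1)) := by
      rw [Module.card_fintype B, Fintype.card_sigma, ← pow_mul]
      simp

/-- Generalized Singleton bound for the sum-rank metric: for any code
`C ⊆ Fqm^N` with at least two codewords and minimum sum-rank distance `dmin`,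
`|C| ≤ q ^ (m * (N - dmin + 1))` where `q = |Fq|` and `N = Σ ℓ, r ℓ`. -/
theorem sumRank_singleton_bound {Fq Fqm : Type*} [Field Fq] [Fintype Fq] [Field Fqm]
    [Algebra Fq Fqm] {m L : ℕ} (B : Module.Basis (Fin m) Fq Fqm) (r : Fin L → ℕ)
    (C : Finset ((ℓ : Fin L) → Fin (r ℓ) → Fqm)) (hC : 2 ≤ C.card)
    (dmin : ℕ)
    (hd : IsLeast {k | ∃ c ∈ C, ∃ d ∈ C, c ≠ d ∧ sumRankDist B r c d = k} dmin) :
    C.card ≤ (Fintype.card Fq) ^ (m * ((∑ ℓ, r ℓ) - dmin + 1)) :=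
  sumRank_singleton_bound_general B r C dmin hd
end

section
/- Extension degree bound: if C ⊆ F_{q^m}^N is a maximum sum-rank distance code for the sum-rank length partition with all blocks of equal size N/L and d_SR(C) > 1, then m ≥ N/L. -/
theorem Matrix.rank_le_card_of_row_eq_zero {K p q : Type*} [Field K] [Fintype p] [Fintype q]
    (A : Matrix p q K) (T : Finset p) (h : ∀ i ∉ T, A i = 0) : A.rank ≤ T.card := by
  classical
  have hA : A = Matrix.diagonal (fun i => if i ∈ T then (1 : K) else 0) * A := by
    ext i j
    by_cases hi : i ∈ T <;> simp [Matrix.diagonal_mul, hi, h]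
  rw [hA]
  refine (Matrix.rank_mul_le_left _ _).trans_eq ?_
  rw [Matrix.rank_diagonal, ← Fintype.card_coe]
  exact Fintype.card_congr (Equiv.subtypeEquivRight fun i => by simp)

section SumRank

variable {K ι κ σ : Type*} [Field K] [Fintype ι] [Fintype σ]

theorem sum_rank_le_card_mul_card_width (M : ι → Matrix κ σ K) :
    ∑ ℓ, (M ℓ).rank ≤ Fintype.card ι * Fintype.card σ := by
  simpa using Finset.sum_le_sum fun ℓ (_ : ℓ ∈ Finset.univ) => (M ℓ).rank_le_card_width

variable [Fintype κ]

theorem sum_rank_le_card_of_row_eq_zero (M : ι → Matrix κ σ K) (T : Finset (ι × κ))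
    (h : ∀ ℓ i, (ℓ, i) ∉ T → M ℓ i = 0) :
    ∑ ℓ, (M ℓ).rank ≤ T.card := by
  classical
  calc ∑ ℓ, (M ℓ).rank
      ≤ ∑ ℓ, (T.filter (·.1 = ℓ)).card :=
        Finset.sum_le_sum fun ℓ _ =>
          ((M ℓ).rank_le_card_of_row_eq_zero ((T.filter (·.1 = ℓ)).image Prod.snd)
            fun i hi => h ℓ i fun hT => hi (Finset.mem_image.2 ⟨(ℓ, i), by simpa, rfl⟩)).trans
          Finset.card_image_le
    _ = T.card := (Finset.card_eq_sum_card_fiberwise fun _ _ => Finset.mem_univ _).symm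

theorem sum_rank_le_card_mul_card_height (M : ι → Matrix κ σ K) :
    ∑ ℓ, (M ℓ).rank ≤ Fintype.card ι * Fintype.card κ := by
  simpa using Finset.sum_le_sum fun ℓ (_ : ℓ ∈ Finset.univ) => (M ℓ).rank_le_card_height

theorem card_le_pow_of_le_sum_rank [Fintype K] {α : Type*} (φ : α → ι → Matrix κ σ K)
    (C : Finset α) (d : ℕ)
    (hdist : ∀ c ∈ C, ∀ c' ∈ C, c ≠ c' → d ≤ ∑ ℓ, (φ c ℓ - φ c' ℓ).rank)
    (T : Finset (ι × κ)) (hT : T.card < d) :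
    C.card ≤ Fintype.card K ^ (Fintype.card σ * (Fintype.card ι * Fintype.card κ - T.card)) := by
  classical
  let puncture : α → ↥Tᶜ → σ → K := fun c p => φ c p.1.1 p.1.2
  have hinj : Set.InjOn puncture C := by
    intro c hc c' hc' heq
    by_contra hne
    have hsmall : ∑ ℓ, (φ c ℓ - φ c' ℓ).rank ≤ T.card :=
      sum_rank_le_card_of_row_eq_zero _ T fun ℓ i hi => by
        funext j
        exact sub_eq_zero.2 (congrFun (congrFun heq ⟨(ℓ, i), Finset.mem_compl.2 hi⟩) j)
    exact absurd (hdist c hc c' hc' hne) (by omega)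
  calc C.card ≤ (Finset.univ : Finset (↥Tᶜ → σ → K)).card :=
        Finset.card_le_card_of_injOn puncture (fun _ _ => Finset.mem_univ _) hinj
    _ = Fintype.card K ^ (Fintype.card σ * (Fintype.card ι * Fintype.card κ - T.card)) := by
        simp [← pow_mul]

end SumRank

theorem extension_degree_bound_general {Fq Fqm : Type*} [Field Fq] [Fintype Fq] [Field Fqm]
    [Algebra Fq Fqm] {m L n : ℕ} (B : Module.Basis (Fin m) Fq Fqm)
    (C : Finset (Fin L → Fin n → Fqm)) (d : ℕ)
    (hd : IsLeast {k | ∃ c ∈ C, ∃ c' ∈ C, c ≠ c' ∧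
        (∑ ℓ, (matrixRep B (c ℓ) - matrixRep B (c' ℓ)).rank) = k} d)
    (hMSRD : C.card = (Fintype.card Fq) ^ (m * (L * n - d + 1)))
    (hd1 : 1 < d) :
    n ≤ m := by
  let φ : (Fin L → Fin n → Fqm) → Fin L → Matrix (Fin m) (Fin n) Fq :=
    fun c ℓ => matrixRep B (c ℓ)
  obtain ⟨⟨c₀, -, c₀', -, -, hc₀⟩, hmin⟩ := hd
  have hdLm : d ≤ L * m := by
    simpa [φ, hc₀] using sum_rank_le_card_mul_card_height fun ℓ => φ c₀ ℓ - φ c₀' ℓ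
  have hdLn : d ≤ L * n := by
    simpa [φ, hc₀] using sum_rank_le_card_mul_card_width fun ℓ => φ c₀ ℓ - φ c₀' ℓ
  obtain ⟨T, -, hT⟩ := Finset.exists_subset_card_eq
    (s := (Finset.univ : Finset (Fin L × Fin m))) (n := d - 1) (by simp; omega)
  have hcard := card_le_pow_of_le_sum_rank φ C d
    (fun c hc c' hc' hne => hmin ⟨c, hc, c', hc', hne, rfl⟩) T (by omega)
  rw [hMSRD, hT, pow_le_pow_iff_right₀ Fintype.one_lt_card] at hcard
  simp only [Fintype.card_fin] at hcard
  zify [hdLm, hdLn, hd1.le, (by omega : d - 1 ≤ L * m)] at hcard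
  nlinarith

/-- Extension degree bound: if `C ⊆ Fqm^N` (with `N = L * n` and the sum-rank
length partition having all `L` blocks of equal size `n = N / L`) is a
maximum sum-rank distance code with minimum sum-rank distance `d > 1`, then
`m ≥ N / L`. -/
theorem extension_degree_bound {Fq Fqm : Type*} [Field Fq] [Fintype Fq] [Field Fqm]
    [Algebra Fq Fqm] {m L n : ℕ} (B : Module.Basis (Fin m) Fq Fqm)
    (C : Finset (Fin L → Fin n → Fqm)) (hC : 2 ≤ C.card) (d : ℕ)
    (hd : IsLeast {k | ∃ c ∈ C, ∃ c' ∈ C, c ≠ c' ∧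
        (∑ ℓ, (matrixRep B (c ℓ) - matrixRep B (c' ℓ)).rank) = k} d)
    (hMSRD : C.card = (Fintype.card Fq) ^ (m * (L * n - d + 1)))
    (hd1 : 1 < d) :
    n ≤ m :=
  extension_degree_bound_general B C d hd hMSRD hd1
end

section
/- If C ⊆ F_{q^m}^N is a maximum rank distance code (MRD) with minimum rank distance greater than 1, then m ≥ N. -/
namespace Matrix

variable {m n K : Type*} [Fintype m] [Fintype n] [Field K]

theorem rank_le_card_of_row_eq_zero_of_notMem (A : Matrix m n K) (s : Finset m)
    (h : ∀ i ∉ s, A i = 0) : A.rank ≤ s.card := by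
  classical
  have hspan : Submodule.span K (Set.range A.row) ≤
      Submodule.span K (s.image A.row : Set (n → K)) := by
    refine Submodule.span_le.2 ?_
    rintro _ ⟨i, rfl⟩
    by_cases hi : i ∈ s
    · exact Submodule.subset_span (Finset.mem_coe.2 (Finset.mem_image_of_mem _ hi))
    · simp [Matrix.row, h i hi]
  rw [rank_eq_finrank_span_row]
  calc _ ≤ _ := Submodule.finrank_mono hspan
    _ ≤ (s.image A.row).card := finrank_span_finset_le_card _
    _ ≤ s.card := Finset.card_image_le

end Matrix

open Finset in
theorem Finset.card_le_pow_of_le_rank_sub {α m n K : Type*} [Fintype m] [Fintype n] [Field K]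
    [Fintype K] (C : Finset α) (φ : α → Matrix m n K) {d : ℕ} (hd : 0 < d)
    (hC : ∀ c ∈ C, ∀ c' ∈ C, c ≠ c' → d ≤ (φ c - φ c').rank) :
    C.card ≤ Fintype.card K ^ ((Fintype.card m - (d - 1)) * Fintype.card n) := by
  classical
  obtain ⟨T, -, hT⟩ :=
    exists_subset_card_eq (s := (univ : Finset m)) (n := Fintype.card m - (d - 1)) (by simp)
  have hinj : Set.InjOn (fun c (i : T) => φ c i) C := by
    intro c hc c' hc' heq
    by_contra hne
    have hrank : (φ c - φ c').rank ≤ Tᶜ.card := by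
      refine Matrix.rank_le_card_of_row_eq_zero_of_notMem _ _ fun i hi => ?_
      exact sub_eq_zero.2 (congrFun heq ⟨i, by simpa using hi⟩)
    have hcompl : Tᶜ.card ≤ d - 1 := by rw [card_compl, hT]; omega
    have := hC c hc c' hc' hne
    omega
  calc C.card ≤ (univ : Finset (T → n → K)).card :=
        card_le_card_of_injOn _ (fun _ _ => mem_coe.2 (mem_univ _)) hinj
    _ = _ := by simp [hT, ← pow_mul, mul_comm]

theorem mrd_extension_degree_bound_general {Fq Fqm : Type*} [Field Fq] [Fintype Fq]
    [Field Fqm] [Algebra Fq Fqm] {m N : ℕ} (B : Module.Basis (Fin m) Fq Fqm)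
    (C : Finset (Fin N → Fqm)) (d : ℕ)
    (hd : IsLeast {k | ∃ c ∈ C, ∃ c' ∈ C, c ≠ c' ∧
        (matrixRep B c - matrixRep B c').rank = k} d)
    (hMRD : C.card = (Fintype.card Fq) ^ (m * (N - d + 1)))
    (hd1 : 1 < d) :
    N ≤ m := by
  obtain ⟨⟨c, -, c', -, -, hrank⟩, hmin⟩ := hd
  have hdm : d ≤ m := hrank ▸ (Matrix.rank_le_card_height _).trans_eq (Fintype.card_fin m)
  have hdN : d ≤ N := hrank ▸ (Matrix.rank_le_card_width _).trans_eq (Fintype.card_fin N)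
  have hsingleton := C.card_le_pow_of_le_rank_sub (matrixRep B) (by omega)
    fun c hc c' hc' hne => hmin ⟨c, hc, c', hc', hne, rfl⟩
  rw [hMRD, Fintype.card_fin, Fintype.card_fin,
    Nat.pow_le_pow_iff_right Fintype.one_lt_card] at hsingleton
  zify [hdN, (by omega : 1 ≤ d), (by omega : d - 1 ≤ m)] at hsingleton
  nlinarith

/-- If `C ⊆ Fqm^N` is a maximum rank distance (MRD) code with minimum rank
distance `d > 1`, then `m ≥ N`. -/
theorem mrd_extension_degree_bound {Fq Fqm : Type*} [Field Fq] [Fintype Fq]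
    [Field Fqm] [Algebra Fq Fqm] {m N : ℕ} (B : Module.Basis (Fin m) Fq Fqm)
    (C : Finset (Fin N → Fqm)) (hC : 2 ≤ C.card) (d : ℕ)
    (hd : IsLeast {k | ∃ c ∈ C, ∃ c' ∈ C, c ≠ c' ∧
        (matrixRep B c - matrixRep B c').rank = k} d)
    (hMRD : C.card = (Fintype.card Fq) ^ (m * (N - d + 1)))
    (hd1 : 1 < d) :
    N ≤ m :=
  mrd_extension_degree_bound_general B C d hd hMRD hd1
end

section
/- The p-PSK map is rank-metric-preserving: for a prime p, let φ : ℤ/pℤ → ℂ be given by φ(z) = exp(2πiz/p), and extend φ entrywise to matrices, giving φ̃ : (ℤ/pℤ)^{n×T} → ℂ^{n×T}. Then for all distinct matrices C, D over ℤ/pℤ, rank(φ̃(C) − φ̃(D)) ≥ rank(C − D), where the left-hand rank is over ℂ and the right-hand rank is over the field F_p. -/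
open Polynomial Matrix Complex Real

section RankAux

variable {K : Type*} [Field K]

/-- From any matrix over a field one can extract `r ≤ rank` linearly independent rows. -/
lemma exists_indep_rows {N M : ℕ} (A : Matrix (Fin N) (Fin M) K) (r : ℕ) (hr : r ≤ A.rank) :
    ∃ f : Fin r → Fin N, LinearIndependent K (fun i => A (f i)) := by
  classical
  obtain ⟨s, hsub, hspan, hind⟩ := exists_linearIndependent K (Set.range A)
  have hfin : s.Finite := (Set.finite_range A).subset hsub
  haveI := hfin.fintype
  have hcard : A.rank = s.toFinset.card := by
    rw [rank_eq_finrank_span_row, show Set.range A.row = Set.range A from rfl, ← hspan, finrank_span_set_eq_card hind]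
  have hr' : r ≤ Fintype.card s := by
    rw [Set.toFinset_card] at hcard; omega
  set emb : Fin r → s := fun i => (Fintype.equivFin s).symm (Fin.castLE hr' i) with hemb
  have hembinj : Function.Injective emb := by
    intro a b hab
    have := (Fintype.equivFin s).symm.injective hab
    exact Fin.castLE_injective hr' this
  refine ⟨fun i => (hsub (emb i).2).choose, ?_⟩
  have heq : (fun i => A ((hsub (emb i).2).choose)) = (fun x : s => (x : Fin M → K)) ∘ emb := by
    funext i
    exact (hsub (emb i).2).choose_spec
  rw [heq]
  exact hind.comp emb hembinj

/-- Any matrix over a field has an invertible `rank × rank` submatrix. -/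
lemma exists_det_ne_zero {N M : ℕ} (A : Matrix (Fin N) (Fin M) K) :
    ∃ (f : Fin A.rank → Fin N) (g : Fin A.rank → Fin M), (A.submatrix f g).det ≠ 0 := by
  classical
  obtain ⟨f, hf⟩ := exists_indep_rows A A.rank le_rfl
  set B : Matrix (Fin A.rank) (Fin M) K := A.submatrix f id with hB
  have hBrows : LinearIndependent K B := hf
  have hBrank : B.rank = A.rank := by
    rw [LinearIndependent.rank_matrix (M := B) hBrows, Fintype.card_fin]
  have hr2 : A.rank ≤ Bᵀ.rank := by rw [rank_transpose, hBrank]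
  obtain ⟨g, hg⟩ := exists_indep_rows Bᵀ A.rank hr2
  refine ⟨f, g, ?_⟩
  have hsq : LinearIndependent K (Bᵀ.submatrix g id) := hg
  have hu : IsUnit (Bᵀ.submatrix g id) := linearIndependent_rows_iff_isUnit.mp hsq
  have hdet : (Bᵀ.submatrix g id).det ≠ 0 := by
    have := (isUnit_iff_isUnit_det _).mp hu
    exact this.ne_zero
  have hrel : Bᵀ.submatrix g id = (A.submatrix f g)ᵀ := by
    ext k j
    simp [hB, transpose_apply, submatrix_apply]
  rw [hrel, det_transpose] at hdet
  exact hdet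

/-- If a matrix over a field has an `r × r` submatrix with nonzero determinant, then
its rank is at least `r`. -/
lemma le_rank_of_submatrix_det_ne_zero {N M r : ℕ} (A : Matrix (Fin N) (Fin M) K)
    (f : Fin r → Fin N) (g : Fin r → Fin M) (h : (A.submatrix f g).det ≠ 0) : r ≤ A.rank := by
  classical
  set P : Matrix (Fin r) (Fin N) K := Matrix.of fun k l => if f k = l then (1 : K) else 0 with hP
  set Qm : Matrix (Fin M) (Fin r) K := Matrix.of fun l k => if l = g k then (1 : K) else 0 with hQm
  have hfac : A.submatrix f g = P * A * Qm := by
    ext k k'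
    simp [hP, hQm, Matrix.mul_apply, ite_mul, mul_ite, Finset.sum_ite_eq, Finset.sum_ite_eq']
  have hrank : (A.submatrix f g).rank = r := by
    rw [rank_of_isUnit _ ((isUnit_iff_isUnit_det _).mpr (isUnit_iff_ne_zero.mpr h)),
      Fintype.card_fin]
  calc r = (A.submatrix f g).rank := hrank.symm
    _ = (P * A * Qm).rank := by rw [hfac]
    _ ≤ (P * A).rank := rank_mul_le_left _ _
    _ ≤ A.rank := rank_mul_le_right _ _

end RankAux

/-- Key arithmetic fact: if an integer polynomial vanishes at the primitive `p`-th root of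
unity `exp(2πi/p)`, then it vanishes at `1` modulo `p`. -/
lemma aeval_one_zmod_eq_zero_of_aeval_exp_eq_zero (p : ℕ) [Fact p.Prime] (q : ℤ[X])
    (hq : aeval (Complex.exp (2 * Real.pi * Complex.I / p)) q = 0) :
    aeval (1 : ZMod p) q = 0 := by
  have hp : p.Prime := Fact.out
  set ζ : ℂ := Complex.exp (2 * Real.pi * Complex.I / p) with hζdef
  have hζ : IsPrimitiveRoot ζ p := Complex.isPrimitiveRoot_exp p hp.ne_zero
  have hmin : cyclotomic p ℚ = minpoly ℚ ζ := cyclotomic_eq_minpoly_rat hζ hp.pos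
  have hdvd : cyclotomic p ℚ ∣ q.map (Int.castRingHom ℚ) := by
    rw [hmin]
    refine minpoly.dvd ℚ ζ ?_
    have : (Int.castRingHom ℚ) = algebraMap ℤ ℚ := by ext z; simp
    rw [this, aeval_map_algebraMap]
    exact hq
  have hdvdZ : cyclotomic p ℤ ∣ q := by
    rw [← map_cyclotomic p (Int.castRingHom ℚ)] at hdvd
    exact (map_dvd_map (Int.castRingHom ℚ) Int.cast_injective (cyclotomic.monic p ℤ)).mp hdvd
  obtain ⟨r, hr⟩ := hdvdZ
  rw [hr, _root_.map_mul]
  have hc : aeval (1 : ZMod p) (cyclotomic p ℤ) = 0 := by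
    have h1 : aeval (1 : ZMod p) (cyclotomic p ℤ)
        = eval 1 ((cyclotomic p ℤ).map (Int.castRingHom (ZMod p))) := by
      rw [eval_map]
      rfl
    rw [h1, map_cyclotomic, eval_one_cyclotomic_prime, ZMod.natCast_self]
  rw [hc, zero_mul]

/-- The `p`-PSK map `z ↦ exp(2πiz/p)` on `ℤ/pℤ`. -/
noncomputable def pskMap (p : ℕ) (z : ZMod p) : ℂ :=
  Complex.exp (2 * Real.pi * Complex.I * (z.val : ℂ) / (p : ℂ))

/-- The `p`-PSK map is rank-metric-preserving: for a prime `p` and distinct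
matrices `C, D` over `ℤ/pℤ`, the rank over `ℂ` of the difference of the
entrywise images is at least the rank of `C − D` over `F_p`. -/
theorem pskMap_rank_metric_preserving (p : ℕ) [Fact p.Prime] {n T : ℕ}
    (C D : Matrix (Fin n) (Fin T) (ZMod p)) (h : C ≠ D) :
    (C - D).rank ≤
      (Matrix.of fun i j => pskMap p (C i j) - pskMap p (D i j)).rank := by
  classical
  have hp : p.Prime := Fact.out
  set ζ : ℂ := Complex.exp (2 * Real.pi * Complex.I / p) with hζdef
  have hζ : IsPrimitiveRoot ζ p := Complex.isPrimitiveRoot_exp p hp.ne_zero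
  have hζ1 : ζ ≠ 1 := hζ.ne_one hp.one_lt
  set Q : Matrix (Fin n) (Fin T) ℤ[X] := Matrix.of fun i j =>
    (∑ k ∈ Finset.range (C i j).val, X ^ k) - ∑ k ∈ Finset.range (D i j).val, X ^ k with hQ
  -- The reduction of Q at 1 over ZMod p is C - D.
  have h1 : C - D = Q.map (aeval (1 : ZMod p)) := by
    ext i j
    simp only [Matrix.sub_apply, Matrix.map_apply, hQ, Matrix.of_apply, map_sub, map_sum,
      map_pow, aeval_X, one_pow, Finset.sum_const, Finset.card_range, nsmul_eq_mul, mul_one]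
    rw [ZMod.natCast_val, ZMod.natCast_val, ZMod.cast_id, ZMod.cast_id]
  -- The image matrix equals (ζ - 1) • (Q evaluated at ζ).
  have hexp : ∀ a : ℕ, Complex.exp (2 * Real.pi * Complex.I * (a : ℂ) / p) = ζ ^ a := by
    intro a
    rw [hζdef, ← Complex.exp_nat_mul]
    congr 1
    ring
  have h2 : (Matrix.of fun i j => pskMap p (C i j) - pskMap p (D i j))
      = (ζ - 1) • Q.map (aeval ζ) := by
    ext i j
    simp only [Matrix.of_apply, Matrix.smul_apply, Matrix.map_apply, hQ, smul_eq_mul,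
      map_sub, map_sum, map_pow, aeval_X, pskMap]
    rw [hexp, hexp]
    linear_combination (geom_sum_mul ζ (D i j).val) - (geom_sum_mul ζ (C i j).val)
  -- Extract an invertible submatrix of C - D.
  obtain ⟨f, g, hdet⟩ := exists_det_ne_zero (C - D)
  -- The corresponding submatrix determinant of Q evaluated at ζ is nonzero.
  have key1 : (Q.submatrix f g).map (aeval (1 : ZMod p)) = (C - D).submatrix f g := by
    ext k l
    simp [h1]
  have hd1 : aeval (1 : ZMod p) (Q.submatrix f g).det ≠ 0 := by
    rw [AlgHom.map_det]
    simp only [AlgHom.mapMatrix_apply]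
    rw [key1]
    exact hdet
  have key2 : (Q.submatrix f g).map (aeval ζ) = (Q.map (aeval ζ)).submatrix f g := by
    ext k l
    simp
  have hd2 : ((Q.map (aeval ζ)).submatrix f g).det ≠ 0 := by
    rw [← key2, show (Q.submatrix f g).map ⇑(aeval ζ) = (aeval ζ).mapMatrix (Q.submatrix f g) from rfl, ← AlgHom.map_det]
    intro h0
    exact hd1 (aeval_one_zmod_eq_zero_of_aeval_exp_eq_zero p _ h0)
  have hle : (C - D).rank ≤ (Q.map (aeval ζ)).rank :=
    le_rank_of_submatrix_det_ne_zero _ f g hd2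
  -- Finally, scaling by the nonzero scalar ζ - 1 does not change the rank.
  have hsmul : ((ζ - 1) • Q.map (aeval ζ)).rank = (Q.map (aeval ζ)).rank := by
    have hA : ((ζ - 1) • (1 : Matrix (Fin n) (Fin n) ℂ)) * Q.map (aeval ζ)
        = (ζ - 1) • Q.map (aeval ζ) := by
      rw [Matrix.smul_mul, Matrix.one_mul]
    rw [← hA]
    refine rank_mul_eq_right_of_isUnit_det _ _ ?_
    rw [det_smul, det_one, mul_one]
    exact (isUnit_iff_ne_zero.mpr (pow_ne_zero _ (sub_ne_zero.mpr hζ1)))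
  rw [h2, hsmul]
  exact hle
end
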